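/- arXiv:1708.06626 — 13 statements merged into one kernel-verified Lean document; each statement's English description precedes it below -/
import Mathlib

section
/- Let X be a T0 topological space. Then X is T_{1/3} (every compact subset is λ-closed) if and only if for each compact subset C of X there exist a closed subset F and a downset D (with respect to the specialization order) such that C = F \ D. -/
/-- A T0 space is `T_{1/3}` (every compact subset is λ-closed, i.e. the intersection of a
saturated set and a closed set) iff for every compact subset `C` there are a closed set
`F` and a downset `D` (for the specialization order) with `C = F \ D`. -/
theorem t_third_iff_compact_eq_closed_sdiff_downset {X : Type*} [TopologicalSpace X]
    [T0Space X] :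
    (∀ C : Set X, IsCompact C →
      ∃ (𝒰 : Set (Set X)) (G : Set X), (∀ U ∈ 𝒰, IsOpen U) ∧ IsClosed G ∧
        C = ⋂₀ 𝒰 ∩ G) ↔
    (∀ C : Set X, IsCompact C →
      ∃ F D : Set X, IsClosed F ∧
        (∀ x y : X, y ∈ D → x ∈ closure ({y} : Set X) → x ∈ D) ∧
        C = F \ D) := by
  constructor
  · intro h C hC
    obtain ⟨𝒰, G, hU, hG, hCeq⟩ := h C hC
    refine ⟨G, (⋂₀ 𝒰)ᶜ, hG, ?_, ?_⟩
    · intro x y hy hxy hx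
      apply hy
      intro U hUmem
      have hUopen := hU U hUmem
      have hxU : x ∈ U := hx U hUmem
      rcases mem_closure_iff.mp hxy U hUopen hxU with ⟨z, hzU, hz⟩
      rw [Set.mem_singleton_iff] at hz
      exact hz ▸ hzU
    · rw [hCeq, Set.diff_compl, Set.inter_comm]
  · intro h C hC
    obtain ⟨F, D, hF, hD, hCeq⟩ := h C hC
    refine ⟨{U | IsOpen U ∧ C ⊆ U}, F, fun U hU => hU.1, hF, ?_⟩
    apply Set.Subset.antisymm
    · intro x hx
      exact ⟨fun U hU => hU.2 hx, (hCeq ▸ hx).1⟩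
    · rintro y ⟨hy1, hy2⟩
      -- closure {y} meets C
      have hmeet : (closure ({y} : Set X) ∩ C).Nonempty := by
        by_contra hcon
        rw [Set.not_nonempty_iff_eq_empty] at hcon
        have hCsub : C ⊆ (closure ({y} : Set X))ᶜ := by
          intro z hz hzc
          exact absurd (Set.mem_inter hzc hz) (by rw [hcon]; exact id)
        have hyU : y ∈ (closure ({y} : Set X))ᶜ :=
          hy1 _ ⟨isClosed_closure.isOpen_compl, hCsub⟩
        exact hyU (subset_closure rfl)
      obtain ⟨x, hxc, hxC⟩ := hmeet
      rw [hCeq]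
      refine ⟨hy2, fun hyD => ?_⟩
      exact (hCeq ▸ hxC).2 (hD x y hyD hxc)
end

section
/- Let X be a T0 topological space. Then X is T_{1/2} (every singleton is closed or open) if and only if X has height at most 1 with respect to the specialization order (i.e., there are no points x < y < z) and every point of height 1 (i.e., every non-minimal point) x has {x} open. -/
/-- A T0 space is `T_{1/2}` (every singleton is closed or open) iff it has height at most
one w.r.t. the specialization order and every non-minimal point is open. -/
theorem t_half_iff_height_le_one_and_nonminimal_open {X : Type*} [TopologicalSpace X]
    [T0Space X] :
    (∀ x : X, IsClosed ({x} : Set X) ∨ IsOpen ({x} : Set X)) ↔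
    ((¬ ∃ x y z : X,
        (x ∈ closure ({y} : Set X) ∧ y ∉ closure ({x} : Set X)) ∧
        (y ∈ closure ({z} : Set X) ∧ z ∉ closure ({y} : Set X))) ∧
      ∀ x : X, (¬ ∀ y : X, y ∈ closure ({x} : Set X) → x ∈ closure ({y} : Set X)) →
        IsOpen ({x} : Set X)) := by
  constructor
  · intro h
    constructor
    · rintro ⟨x, y, z, ⟨hxy, hyx⟩, ⟨hyz, hzy⟩⟩
      rcases h y with hc | ho
      · -- {y} closed: then x ∈ closure {y} = {y}, so x = y, contradicting y ∉ closure {x}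
        have : x = y := by
          have := hc.closure_eq ▸ hxy
          simpa using this
        subst this
        exact hyx (subset_closure rfl)
      · -- {y} open: y ∈ closure {z} forces {y} ∩ {z} ≠ ∅, so y = z
        have : y = z := by
          have := mem_closure_iff.mp hyz _ ho rfl
          exact (by simpa using this : z = y).symm
        subst this
        exact hzy (subset_closure rfl)
    · intro x hx
      rcases h x with hc | ho
      · exfalso
        apply hx
        intro y hy
        have : y = x := by
          have := hc.closure_eq ▸ hy
          simpa using this
        subst this
        exact subset_closure rfl
      · exact ho
  · rintro ⟨_, h2⟩ x
    by_cases hmin : ∀ y : X, y ∈ closure ({x} : Set X) → x ∈ closure ({y} : Set X)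
    · left
      apply isClosed_of_closure_subset
      intro y hy
      have h1 : x ⤳ y := specializes_iff_mem_closure.mpr hy
      have h2' : y ⤳ x := specializes_iff_mem_closure.mpr (hmin y hy)
      exact (h2'.antisymm h1).eq
    · exact Or.inr (h2 x hmin)
end

section
/- For a topological space X the following are equivalent: (1) X is T_{YS}, i.e., for any two distinct points x, y the intersection closure {x} ∩ closure {y} is either ∅, {x}, or {y}; (2) X is T0 and the derived sets of any two distinct points are disjoint, i.e., (closure {x} \ {x}) ∩ (closure {y} \ {y}) = ∅ for all x ≠ y; (3) X is T_{1/4} (every point is closed or kerneled) and X is a downward forest with respect to the specialization preorder, i.e., for every point z any two points of ker z are comparable under the specialization preorder. -/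
/-- For a topological space `X` the following are equivalent:
(1) `X` is `T_{YS}`: for distinct `x, y`, `closure {x} ∩ closure {y}` is `∅`, `{x}` or `{y}`;
(2) `X` is T0 and the derived sets of any two distinct points are disjoint;
(3) `X` is `T_{1/4}` and a downward forest w.r.t. the specialization preorder. -/
theorem tYS_iff_t0_disjoint_derived_iff_tQuarter_forest {X : Type*} [TopologicalSpace X] :
    ((∀ x y : X, x ≠ y →
        closure ({x} : Set X) ∩ closure ({y} : Set X) = ∅ ∨
        closure ({x} : Set X) ∩ closure ({y} : Set X) = {x} ∨
        closure ({x} : Set X) ∩ closure ({y} : Set X) = {y}) ↔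
      (T0Space X ∧ ∀ x y : X, x ≠ y →
        (closure ({x} : Set X) \ {x}) ∩ (closure ({y} : Set X) \ {y}) = ∅)) ∧
    ((∀ x y : X, x ≠ y →
        closure ({x} : Set X) ∩ closure ({y} : Set X) = ∅ ∨
        closure ({x} : Set X) ∩ closure ({y} : Set X) = {x} ∨
        closure ({x} : Set X) ∩ closure ({y} : Set X) = {y}) ↔
      ((∀ x : X, IsClosed ({x} : Set X) ∨
          {y : X | x ∈ closure ({y} : Set X)} = {x}) ∧
        (∀ z y y' : X, z ∈ closure ({y} : Set X) → z ∈ closure ({y'} : Set X) →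
          y ∈ closure ({y'} : Set X) ∨ y' ∈ closure ({y} : Set X)))) := by
  have mem_self : ∀ x : X, x ∈ closure ({x} : Set X) := fun x => subset_closure rfl
  have key : ∀ x y : X, x ∈ closure ({y} : Set X) →
      closure ({x} : Set X) ⊆ closure ({y} : Set X) :=
    fun x y h => closure_minimal (Set.singleton_subset_iff.2 h) isClosed_closure
  constructor
  · constructor
    · intro h
      constructor
      · refine ⟨fun a b hab => ?_⟩
        by_contra hne
        have hcl : closure ({a} : Set X) = closure ({b} : Set X) :=
          inseparable_iff_closure_eq.mp hab
        rcases h a b hne with h1 | h1 | h1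
        · have : a ∈ closure ({a} : Set X) ∩ closure ({b} : Set X) :=
            ⟨mem_self a, hcl ▸ mem_self a⟩
          rw [h1] at this; exact this
        · have : b ∈ closure ({a} : Set X) ∩ closure ({b} : Set X) :=
            ⟨hcl ▸ mem_self b, mem_self b⟩
          rw [h1] at this; exact hne this.symm
        · have : a ∈ closure ({a} : Set X) ∩ closure ({b} : Set X) :=
            ⟨mem_self a, hcl ▸ mem_self a⟩
          rw [h1] at this; exact hne this
      · intro x y hxy
        rw [Set.eq_empty_iff_forall_notMem]
        rintro z ⟨⟨hzx, hzx'⟩, ⟨hzy, hzy'⟩⟩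
        have hmem : z ∈ closure ({x} : Set X) ∩ closure ({y} : Set X) := ⟨hzx, hzy⟩
        rcases h x y hxy with h1 | h1 | h1
        · rw [h1] at hmem; exact hmem
        · rw [h1] at hmem; exact hzx' hmem
        · rw [h1] at hmem; exact hzy' hmem
    · rintro ⟨ht0, hd⟩ x y hxy
      haveI := ht0
      have hsub : closure ({x} : Set X) ∩ closure ({y} : Set X) ⊆ {x, y} := by
        intro z ⟨hzx, hzy⟩
        by_contra hz
        simp only [Set.mem_insert_iff, Set.mem_singleton_iff, not_or] at hz
        have : z ∈ (closure ({x} : Set X) \ {x}) ∩ (closure ({y} : Set X) \ {y}) :=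
          ⟨⟨hzx, hz.1⟩, ⟨hzy, hz.2⟩⟩
        rw [hd x y hxy] at this
        exact this
      by_cases hx : x ∈ closure ({y} : Set X)
      · by_cases hy : y ∈ closure ({x} : Set X)
        · exfalso
          exact hxy ((inseparable_iff_closure_eq.mpr
            (Set.Subset.antisymm (key x y hx) (key y x hy))).eq)
        · right; left
          apply Set.Subset.antisymm
          · intro z hz
            have hz2 := hsub hz
            simp only [Set.mem_insert_iff, Set.mem_singleton_iff] at hz2
            rcases hz2 with rfl | rfl
            · rfl
            · exact absurd hz.1 hy
          · exact Set.singleton_subset_iff.2 ⟨mem_self x, hx⟩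
      · by_cases hy : y ∈ closure ({x} : Set X)
        · right; right
          apply Set.Subset.antisymm
          · intro z hz
            have hz2 := hsub hz
            simp only [Set.mem_insert_iff, Set.mem_singleton_iff] at hz2
            rcases hz2 with rfl | rfl
            · exact absurd hz.2 hx
            · rfl
          · exact Set.singleton_subset_iff.2 ⟨hy, mem_self y⟩
        · left
          rw [Set.eq_empty_iff_forall_notMem]
          intro z hz
          have hz2 := hsub hz
          simp only [Set.mem_insert_iff, Set.mem_singleton_iff] at hz2
          rcases hz2 with h | h
          · rw [h] at hz; exact hx hz.2
          · rw [h] at hz; exact hy hz.1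
  · constructor
    · intro h
      constructor
      · intro x
        by_cases hc : IsClosed ({x} : Set X)
        · exact Or.inl hc
        · right
          ext y
          simp only [Set.mem_setOf_eq, Set.mem_singleton_iff]
          constructor
          · intro hxy
            by_contra hne
            have hne' : x ≠ y := fun e => hne e.symm
            have hns : ¬ closure ({x} : Set X) ⊆ {x} := by
              intro hs
              exact hc ((Set.Subset.antisymm hs subset_closure) ▸ isClosed_closure)
            obtain ⟨z, hz, hznx⟩ := Set.not_subset.mp hns
            have hmx : x ∈ closure ({x} : Set X) ∩ closure ({y} : Set X) :=
              ⟨mem_self x, hxy⟩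
            have hmz : z ∈ closure ({x} : Set X) ∩ closure ({y} : Set X) :=
              ⟨hz, key x y hxy hz⟩
            rcases h x y hne' with h1 | h1 | h1
            · rw [h1] at hmx; exact hmx
            · rw [h1] at hmz; exact hznx hmz
            · rw [h1] at hmx; exact hne' hmx
          · rintro rfl; exact mem_self y
      · intro z y y' hzy hzy'
        by_cases hne : y = y'
        · exact Or.inl (hne ▸ mem_self y)
        have hmz : z ∈ closure ({y} : Set X) ∩ closure ({y'} : Set X) := ⟨hzy, hzy'⟩
        rcases h y y' hne with h1 | h1 | h1
        · rw [h1] at hmz; exact hmz.elim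
        · rw [h1] at hmz
          exact Or.inl (hmz ▸ hzy')
        · rw [h1] at hmz
          exact Or.inr (hmz ▸ hzy)
    · rintro ⟨hq, hf⟩ x y hxy
      by_cases hE : closure ({x} : Set X) ∩ closure ({y} : Set X) = ∅
      · exact Or.inl hE
      obtain ⟨z, hzx, hzy⟩ := Set.nonempty_iff_ne_empty.mpr hE
      rcases hf z x y hzx hzy with hx | hy
      · rcases hq x with hc | hk
        · right; left
          have hcx : closure ({x} : Set X) = {x} := hc.closure_eq
          apply Set.Subset.antisymm
          · intro w hw
            exact hcx ▸ hw.1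
          · exact Set.singleton_subset_iff.2 ⟨mem_self x, hx⟩
        · exfalso
          have : y ∈ {y' : X | x ∈ closure ({y'} : Set X)} := hx
          rw [hk] at this
          exact hxy this.symm
      · rcases hq y with hc | hk
        · right; right
          have hcy : closure ({y} : Set X) = {y} := hc.closure_eq
          apply Set.Subset.antisymm
          · intro w hw
            exact hcy ▸ hw.2
          · exact Set.singleton_subset_iff.2 ⟨hy, mem_self y⟩
        · exfalso
          have : x ∈ {y' : X | y ∈ closure ({y'} : Set X)} := hy
          rw [hk] at this
          exact hxy this
end

section
/- A topological space X is a λ-space (i.e., the union of any two λ-closed subsets is λ-closed) if and only if for every λ-closed subset U of X the set closure(U) \ U is contained in the set of minimal points of X. -/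
/-- A subset of a topological space is λ-closed if it is the intersection of a saturated
set (an intersection of open sets) and a closed set. -/
def IsLambdaClosed {X : Type*} [TopologicalSpace X] (A : Set X) : Prop :=
  ∃ (𝒰 : Set (Set X)) (G : Set X), (∀ U ∈ 𝒰, IsOpen U) ∧ IsClosed G ∧ A = ⋂₀ 𝒰 ∩ G

private lemma mem_open_of_specializes {X : Type*} [TopologicalSpace X] {x z : X} {O : Set X}
    (hzx : z ∈ closure ({x} : Set X)) (hO : IsOpen O) (hzO : z ∈ O) : x ∈ O := by
  obtain ⟨w, hwO, hwx⟩ := mem_closure_iff.mp hzx O hO hzO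
  rwa [Set.mem_singleton_iff.mp hwx] at hwO

private lemma mem_of_lambdaClosed {X : Type*} [TopologicalSpace X] {C : Set X}
    (hC : IsLambdaClosed C) {x z : X} (hz : z ∈ C)
    (hzx : z ∈ closure ({x} : Set X)) (hxz : x ∈ closure ({z} : Set X)) : x ∈ C := by
  obtain ⟨𝒱, H, hV, hH, hCeq⟩ := hC
  rw [hCeq]
  refine ⟨Set.mem_sInter.mpr fun V hVm => ?_, ?_⟩
  · exact mem_open_of_specializes hzx (hV V hVm) ((hCeq ▸ hz).1 V hVm)
  · exact closure_minimal (Set.singleton_subset_iff.mpr (hCeq ▸ hz).2) hH hxz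

/-- A topological space is a λ-space (the union of two λ-closed sets is λ-closed) iff
for every λ-closed subset `U` the shell `closure U \ U` consists of minimal points. -/
theorem lambda_space_iff_shell_subset_min {X : Type*} [TopologicalSpace X] :
    (∀ A B : Set X, IsLambdaClosed A → IsLambdaClosed B → IsLambdaClosed (A ∪ B)) ↔
    (∀ U : Set X, IsLambdaClosed U →
      closure U \ U ⊆
        {x : X | ∀ y : X, y ∈ closure ({x} : Set X) → x ∈ closure ({y} : Set X)}) := by
  constructor
  · intro h U hU x hx y hy
    by_contra hxy
    have hB : IsLambdaClosed (closure ({y} : Set X)) :=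
      ⟨∅, closure {y}, by simp, isClosed_closure, by simp⟩
    obtain ⟨𝒰, G, hop, hG, hAB⟩ := h U (closure {y}) hU hB
    have hxG : x ∈ G := by
      have h1 : closure (U ∪ closure ({y} : Set X)) ⊆ G := by
        apply closure_minimal _ hG
        rw [hAB]; exact Set.inter_subset_right
      exact h1 (closure_mono Set.subset_union_left hx.1)
    have hxI : x ∈ ⋂₀ 𝒰 := by
      refine Set.mem_sInter.mpr fun O hO => ?_
      have hsub : U ∪ closure ({y} : Set X) ⊆ O := by
        rw [hAB]; exact fun z hz => hz.1 O hO
      exact mem_open_of_specializes hy (hop O hO) (hsub (Or.inr (subset_closure rfl)))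
    have : x ∈ U ∪ closure ({y} : Set X) := hAB ▸ ⟨hxI, hxG⟩
    rcases this with h1 | h2
    · exact hx.2 h1
    · exact hxy h2
  · intro h A B hA hB
    refine ⟨{O | IsOpen O ∧ A ∪ B ⊆ O}, closure (A ∪ B), fun O hO => hO.1, isClosed_closure, ?_⟩
    apply Set.Subset.antisymm
    · exact fun x hx => ⟨Set.mem_sInter.mpr fun O hO => hO.2 hx, subset_closure hx⟩
    · rintro x ⟨hx1, hx2⟩
      by_contra hxAB
      have hmin : ∀ y : X, y ∈ closure ({x} : Set X) → x ∈ closure ({y} : Set X) := by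
        rw [closure_union] at hx2
        rcases hx2 with hc | hc
        · exact h A hA ⟨hc, fun hxa => hxAB (Or.inl hxa)⟩
        · exact h B hB ⟨hc, fun hxb => hxAB (Or.inr hxb)⟩
      have hz : ∃ z ∈ A ∪ B, z ∈ closure ({x} : Set X) := by
        by_contra hno
        push_neg at hno
        have hOmem : (closure ({x} : Set X))ᶜ ∈ {O | IsOpen O ∧ A ∪ B ⊆ O} :=
          ⟨isClosed_closure.isOpen_compl, fun z hzm => hno z hzm⟩
        exact (hx1 _ hOmem) (subset_closure rfl)
      obtain ⟨z, hzAB, hzx⟩ := hz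
      have hxz : x ∈ closure ({z} : Set X) := hmin z hzx
      rcases hzAB with hzA | hzB
      · exact hxAB (Or.inl (mem_of_lambdaClosed hA hzA hzx hxz))
      · exact hxAB (Or.inr (mem_of_lambdaClosed hB hzB hzx hxz))
end

section
/- A topological space X is S_{YS} (i.e., for any points x, y with x̂ ≠ ŷ the intersection closure {x} ∩ closure {y} is either ∅, x̂, or ŷ) if and only if (closure {x} \ x̂) ∩ (closure {y} \ ŷ) = ∅ for any points x, y ∈ X with x̂ ≠ ŷ. -/
/-- The class of a point `x`: the set of points with the same closure. -/
def ptClass {X : Type*} [TopologicalSpace X] (x : X) : Set X :=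
  {y : X | closure ({x} : Set X) = closure ({y} : Set X)}

lemma ptClass_eq_of_closure_eq {X : Type*} [TopologicalSpace X] {x y : X}
    (h : closure ({x} : Set X) = closure ({y} : Set X)) : ptClass x = ptClass y := by
  ext z; simp only [ptClass, Set.mem_setOf_eq, h]

lemma closure_subset_of_mem {X : Type*} [TopologicalSpace X] {x y : X}
    (h : y ∈ closure ({x} : Set X)) :
    closure ({y} : Set X) ⊆ closure ({x} : Set X) :=
  closure_minimal (Set.singleton_subset_iff.2 h) isClosed_closure

lemma aux_inter_eq {X : Type*} [TopologicalSpace X]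
    (h : ∀ x y : X, ptClass x ≠ ptClass y →
      (closure ({x} : Set X) \ ptClass x) ∩ (closure ({y} : Set X) \ ptClass y) = ∅)
    {x y z : X} (hxy : ptClass x ≠ ptClass y)
    (hz : z ∈ ptClass x) (hzy : z ∈ closure ({y} : Set X)) :
    closure ({x} : Set X) ∩ closure ({y} : Set X) = ptClass x := by
  have hxz : closure ({x} : Set X) = closure ({z} : Set X) := hz
  have hxsub : closure ({x} : Set X) ⊆ closure ({y} : Set X) := by
    rw [hxz]; exact closure_subset_of_mem hzy
  apply Set.Subset.antisymm
  · intro w ⟨hwx, hwy⟩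
    by_contra hwpx
    have hwpy : w ∉ ptClass y := by
      intro hwpy
      apply hxy
      apply ptClass_eq_of_closure_eq
      exact Set.Subset.antisymm hxsub (hwpy ▸ closure_subset_of_mem hwx)
    have := h x y hxy
    exact absurd (this ▸ ⟨⟨hwx, hwpx⟩, ⟨hwy, hwpy⟩⟩ : w ∈ (∅ : Set X)) (Set.notMem_empty w)
  · intro w hw
    have hxw : closure ({x} : Set X) = closure ({w} : Set X) := hw
    have hwx : w ∈ closure ({x} : Set X) := hxw ▸ subset_closure rfl
    exact ⟨hwx, hxsub hwx⟩

/-- A space is `S_{YS}` (for points with distinct classes, `closure {x} ∩ closure {y}` is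
`∅`, `x̂` or `ŷ`) iff the shells of classes of points with distinct classes are disjoint. -/
theorem sYS_iff_shells_disjoint {X : Type*} [TopologicalSpace X] :
    (∀ x y : X, ptClass x ≠ ptClass y →
      closure ({x} : Set X) ∩ closure ({y} : Set X) = ∅ ∨
      closure ({x} : Set X) ∩ closure ({y} : Set X) = ptClass x ∨
      closure ({x} : Set X) ∩ closure ({y} : Set X) = ptClass y) ↔
    (∀ x y : X, ptClass x ≠ ptClass y →
      (closure ({x} : Set X) \ ptClass x) ∩ (closure ({y} : Set X) \ ptClass y) = ∅) := by
  constructor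
  · intro h x y hxy
    rw [Set.eq_empty_iff_forall_notMem]
    rintro z ⟨⟨hzx, hzpx⟩, ⟨hzy, hzpy⟩⟩
    rcases h x y hxy with he | he | he
    · exact Set.notMem_empty z (he ▸ ⟨hzx, hzy⟩ : z ∈ (∅ : Set X))
    · exact hzpx (he ▸ ⟨hzx, hzy⟩)
    · exact hzpy (he ▸ ⟨hzx, hzy⟩)
  · intro h x y hxy
    by_cases he : closure ({x} : Set X) ∩ closure ({y} : Set X) = ∅
    · exact Or.inl he
    obtain ⟨z, hzx, hzy⟩ := Set.nonempty_iff_ne_empty.2 he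
    have hz : z ∈ ptClass x ∨ z ∈ ptClass y := by
      by_contra hc
      push_neg at hc
      exact Set.notMem_empty z
        ((h x y hxy) ▸ ⟨⟨hzx, hc.1⟩, ⟨hzy, hc.2⟩⟩ : z ∈ (∅ : Set X))
    rcases hz with hz | hz
    · exact Or.inr (Or.inl (aux_inter_eq h hxy hz hzy))
    · refine Or.inr (Or.inr ?_)
      rw [Set.inter_comm]
      exact aux_inter_eq h hxy.symm hz hzx
end

section
/- A topological space X is S_Y if and only if X has height at most 1 with respect to the specialization preorder (no points x < y < z) and X contains no min-S¹ configuration, i.e., there are no points a, b, c, d whose classes â, b̂, ĉ, d̂ are pairwise distinct such that a ≤ c, a ≤ d, b ≤ c, b ≤ d, a and b are incomparable, and c and d are incomparable. -/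
lemma ptClass_eq_iff {X : Type*} [TopologicalSpace X] {u v : X} :
    ptClass u = ptClass v ↔ closure ({u} : Set X) = closure ({v} : Set X) := by
  constructor
  · intro h
    have hv : v ∈ ptClass v := rfl
    rw [← h] at hv
    exact hv
  · intro h
    ext z
    simp only [ptClass, Set.mem_setOf_eq, h]

lemma cl_subset {X : Type*} [TopologicalSpace X] {u v : X}
    (h : u ∈ closure ({v} : Set X)) :
    closure ({u} : Set X) ⊆ closure ({v} : Set X) :=
  closure_minimal (Set.singleton_subset_iff.mpr h) isClosed_closure

lemma mem_of_ptClass_eq {X : Type*} [TopologicalSpace X] {u v : X}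
    (h : ptClass u = ptClass v) : u ∈ closure ({v} : Set X) := by
  rw [ptClass_eq_iff] at h
  rw [← h]
  exact subset_closure rfl

/-- A space is `S_Y` (for points with distinct classes, `closure {x} ∩ closure {y}`
contains at most one class) iff it has height at most one w.r.t. the specialization
preorder and contains no min-S¹ configuration. -/
theorem sY_iff_height_le_one_and_min_s1_free {X : Type*} [TopologicalSpace X] :
    (∀ x y : X, ptClass x ≠ ptClass y →
      ∀ u ∈ closure ({x} : Set X) ∩ closure ({y} : Set X),
        ∀ v ∈ closure ({x} : Set X) ∩ closure ({y} : Set X),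
          ptClass u = ptClass v) ↔
    ((¬ ∃ x y z : X,
        (x ∈ closure ({y} : Set X) ∧ y ∉ closure ({x} : Set X)) ∧
        (y ∈ closure ({z} : Set X) ∧ z ∉ closure ({y} : Set X))) ∧
      ¬ ∃ a b c d : X,
        ptClass a ≠ ptClass b ∧ ptClass a ≠ ptClass c ∧ ptClass a ≠ ptClass d ∧
        ptClass b ≠ ptClass c ∧ ptClass b ≠ ptClass d ∧ ptClass c ≠ ptClass d ∧
        a ∈ closure ({c} : Set X) ∧ a ∈ closure ({d} : Set X) ∧
        b ∈ closure ({c} : Set X) ∧ b ∈ closure ({d} : Set X) ∧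
        (a ∉ closure ({b} : Set X) ∧ b ∉ closure ({a} : Set X)) ∧
        (c ∉ closure ({d} : Set X) ∧ d ∉ closure ({c} : Set X))) := by
  constructor
  · intro hS
    constructor
    · rintro ⟨x, y, z, ⟨hxy, hyx⟩, ⟨hyz, hzy⟩⟩
      -- apply S_Y to y, z : x and y are both in closure{y} ∩ closure{z}
      have hyzne : ptClass y ≠ ptClass z := fun h => hzy (mem_of_ptClass_eq h.symm)
      have hxz : x ∈ closure ({z} : Set X) := cl_subset hyz hxy
      have hyy : y ∈ closure ({y} : Set X) := subset_closure rfl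
      have := hS y z hyzne x ⟨hxy, hxz⟩ y ⟨hyy, hyz⟩
      exact hyx (mem_of_ptClass_eq this.symm)
    · rintro ⟨a, b, c, d, hab, _, _, _, _, hcd, hac, had, hbc, hbd, ⟨_, _⟩, _⟩
      exact hab (hS c d hcd a ⟨hac, had⟩ b ⟨hbc, hbd⟩)
  · rintro ⟨hht, hs1⟩ x y hxy u ⟨hux, huy⟩ v ⟨hvx, hvy⟩
    by_contra huv
    -- u and v are incomparable
    have incomp : ∀ p q : X, p ∈ closure ({q} : Set X) → q ∈ closure ({p} : Set X) →
        ptClass p = ptClass q := by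
      intro p q h1 h2
      exact ptClass_eq_iff.mpr (le_antisymm (cl_subset h1) (cl_subset h2))
    -- helper: if p < q and q ≤ r then p's class or q's class equals r's class issues
    -- first: x and y are incomparable
    have hxny : x ∉ closure ({y} : Set X) := by
      intro h
      -- x < y (since classes differ); u ≤ x < y
      have hyx : y ∉ closure ({x} : Set X) := fun h' => hxy (incomp x y h h')
      have hu : ptClass u = ptClass x := by
        by_contra hne
        have hxu : x ∉ closure ({u} : Set X) := fun h' => hne (incomp u x hux h')
        exact hht ⟨u, x, y, ⟨hux, hxu⟩, ⟨h, hyx⟩⟩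
      have hv : ptClass v = ptClass x := by
        by_contra hne
        have hxv : x ∉ closure ({v} : Set X) := fun h' => hne (incomp v x hvx h')
        exact hht ⟨v, x, y, ⟨hvx, hxv⟩, ⟨h, hyx⟩⟩
      exact huv (hu.trans hv.symm)
    have hynx : y ∉ closure ({x} : Set X) := by
      intro h
      have hxy' : x ∉ closure ({y} : Set X) := hxny
      have hu : ptClass u = ptClass y := by
        by_contra hne
        have hyu : y ∉ closure ({u} : Set X) := fun h' => hne (incomp u y huy h')
        exact hht ⟨u, y, x, ⟨huy, hyu⟩, ⟨h, hxy'⟩⟩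
      have hv : ptClass v = ptClass y := by
        by_contra hne
        have hyv : y ∉ closure ({v} : Set X) := fun h' => hne (incomp v y hvy h')
        exact hht ⟨v, y, x, ⟨hvy, hyv⟩, ⟨h, hxy'⟩⟩
      exact huv (hu.trans hv.symm)
    -- u, v incomparable
    have huvn : u ∉ closure ({v} : Set X) := by
      intro h
      -- u < v ≤ x and v ≤ y
      have hvu : v ∉ closure ({u} : Set X) := fun h' => huv (incomp u v h h')
      have hvxc : ptClass v = ptClass x := by
        by_contra hne
        have hxv : x ∉ closure ({v} : Set X) := fun h' => hne (incomp v x hvx h')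
        exact hht ⟨u, v, x, ⟨h, hvu⟩, ⟨hvx, hxv⟩⟩
      have hvyc : ptClass v = ptClass y := by
        by_contra hne
        have hyv : y ∉ closure ({v} : Set X) := fun h' => hne (incomp v y hvy h')
        exact hht ⟨u, v, y, ⟨h, hvu⟩, ⟨hvy, hyv⟩⟩
      exact hxy (hvxc.symm.trans hvyc)
    have hvun : v ∉ closure ({u} : Set X) := by
      intro h
      have huv' : u ∉ closure ({v} : Set X) := huvn
      have huxc : ptClass u = ptClass x := by
        by_contra hne
        have hxu : x ∉ closure ({u} : Set X) := fun h' => hne (incomp u x hux h')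
        exact hht ⟨v, u, x, ⟨h, huv'⟩, ⟨hux, hxu⟩⟩
      have huyc : ptClass u = ptClass y := by
        by_contra hne
        have hyu : y ∉ closure ({u} : Set X) := fun h' => hne (incomp u y huy h')
        exact hht ⟨v, u, y, ⟨h, huv'⟩, ⟨huy, hyu⟩⟩
      exact hxy (huxc.symm.trans huyc)
    -- classes of u,x ; u,y ; v,x ; v,y distinct
    have hux' : ptClass u ≠ ptClass x := by
      intro h
      exact hxny (cl_subset huy (mem_of_ptClass_eq h.symm))
    have huy' : ptClass u ≠ ptClass y := by
      intro h
      exact hynx (cl_subset hux (mem_of_ptClass_eq h.symm))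
    have hvx' : ptClass v ≠ ptClass x := by
      intro h
      exact hxny (cl_subset hvy (mem_of_ptClass_eq h.symm))
    have hvy' : ptClass v ≠ ptClass y := by
      intro h
      exact hynx (cl_subset hvx (mem_of_ptClass_eq h.symm))
    exact hs1 ⟨u, v, x, y, huv, hux', huy', hvx', hvy', hxy,
      hux, huy, hvx, hvy, ⟨huvn, hvun⟩, ⟨hxny, hynx⟩⟩
end

section
/- A point x of a topological space X is C₀ (i.e., the derived set closure {x} \ {x} is not the union of a nonempty family of nonempty closed subsets) if and only if x is minimal or the class x̂ contains more than one point. -/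
/-- A point `x` is `C₀` (its derived set `closure {x} \ {x}` is not the union of a
nonempty family of nonempty closed subsets) iff `x` is minimal w.r.t. the specialization
preorder or the class of `x` contains more than one point. -/
theorem c0_iff_minimal_or_class_nontrivial {X : Type*} [TopologicalSpace X] (x : X) :
    (¬ ∃ 𝒞 : Set (Set X), 𝒞.Nonempty ∧ (∀ F ∈ 𝒞, IsClosed F ∧ F.Nonempty) ∧
      ⋃₀ 𝒞 = closure ({x} : Set X) \ {x}) ↔
    ((∀ y : X, y ∈ closure ({x} : Set X) → x ∈ closure ({y} : Set X)) ∨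
      ∃ y : X, y ≠ x ∧ closure ({x} : Set X) = closure ({y} : Set X)) := by
  constructor
  · intro h
    by_contra hc
    push_neg at hc
    obtain ⟨hmin, hcls⟩ := hc
    obtain ⟨y, hy, hxy⟩ := hmin
    -- every z in the derived set D has x ∉ closure {z}
    have key : ∀ z, z ∈ closure ({x} : Set X) \ {x} → x ∉ closure ({z} : Set X) := by
      rintro z ⟨hz1, hz2⟩ hxz
      apply hcls z hz2
      apply le_antisymm
      · exact closure_minimal (Set.singleton_subset_iff.2 hxz) isClosed_closure
      · exact closure_minimal (Set.singleton_subset_iff.2 hz1) isClosed_closure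
    apply h
    refine ⟨{F | ∃ z ∈ closure ({x} : Set X) \ {x}, F = closure {z}},
      ⟨closure {y}, y, ⟨hy, fun e => hxy (e ▸ subset_closure rfl)⟩, rfl⟩, ?_, ?_⟩
    · rintro F ⟨z, _, rfl⟩
      exact ⟨isClosed_closure, z, subset_closure rfl⟩
    · ext w
      simp only [Set.mem_sUnion, Set.mem_setOf_eq]
      constructor
      · rintro ⟨F, ⟨z, hz, rfl⟩, hw⟩
        have hsub : closure ({z} : Set X) ⊆ closure ({x} : Set X) :=
          closure_minimal (Set.singleton_subset_iff.2 hz.1) isClosed_closure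
        refine ⟨hsub hw, fun e => key z hz ?_⟩
        rw [Set.mem_singleton_iff] at e
        exact e ▸ hw
      · intro hw
        exact ⟨closure {w}, ⟨w, hw, rfl⟩, subset_closure rfl⟩
  · rintro h ⟨𝒞, ⟨F0, hF0⟩, hcl, hU⟩
    -- produce y ∈ D with x ∈ closure {y} lying in some F ∈ 𝒞
    obtain ⟨y, hyD, hxy, F, hF, hyF⟩ :
        ∃ y, y ∈ closure ({x} : Set X) \ {x} ∧ x ∈ closure ({y} : Set X) ∧
          ∃ F ∈ 𝒞, y ∈ F := by
      rcases h with hmin | ⟨y, hyx, heq⟩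
      · obtain ⟨z, hz⟩ := (hcl F0 hF0).2
        have hzD : z ∈ closure ({x} : Set X) \ {x} := hU ▸ ⟨F0, hF0, hz⟩
        exact ⟨z, hzD, hmin z hzD.1, F0, hF0, hz⟩
      · have hyD : y ∈ closure ({x} : Set X) \ {x} :=
          ⟨heq ▸ subset_closure rfl, hyx⟩
        obtain ⟨F, hF, hyF⟩ : y ∈ ⋃₀ 𝒞 := hU ▸ hyD
        exact ⟨y, hyD, heq ▸ subset_closure rfl, F, hF, hyF⟩
    have hxF : x ∈ F :=
      closure_minimal (Set.singleton_subset_iff.2 hyF) (hcl F hF).1 hxy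
    have : x ∈ closure ({x} : Set X) \ {x} := hU ▸ ⟨F, hF, hxF⟩
    exact this.2 rfl
end

section
/- A point x of a topological space X is C_R (i.e., the derived set closure {x} \ {x} contains no nonempty closed subset) if and only if the class x̂ is closed. -/
/-- A point `x` is `C_R` (its derived set `closure {x} \ {x}` contains no nonempty closed
subset) iff the class `x̂ = {y | closure {x} = closure {y}}` is closed. -/
theorem cR_iff_class_closed {X : Type*} [TopologicalSpace X] (x : X) :
    (¬ ∃ F : Set X, F.Nonempty ∧ IsClosed F ∧ F ⊆ closure ({x} : Set X) \ {x}) ↔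
    IsClosed {y : X | closure ({x} : Set X) = closure ({y} : Set X)} := by
  set S : Set X := {y : X | closure ({x} : Set X) = closure ({y} : Set X)} with hS
  have hSsub : S ⊆ closure ({x} : Set X) := by
    intro y hy
    have : y ∈ closure ({y} : Set X) := subset_closure rfl
    rwa [← hy] at this
  constructor
  · intro h
    rw [← closure_subset_iff_isClosed]
    intro z hz
    have hzC : z ∈ closure ({x} : Set X) := by
      have := closure_mono hSsub hz
      rwa [closure_closure] at this
    have hsub : closure ({z} : Set X) ⊆ closure ({x} : Set X) :=
      closure_minimal (Set.singleton_subset_iff.2 hzC) isClosed_closure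
    have hx : x ∈ closure ({z} : Set X) := by
      by_contra hx
      exact h ⟨closure ({z} : Set X), ⟨z, subset_closure rfl⟩, isClosed_closure,
        fun w hw => ⟨hsub hw, fun hwx => hx (hwx ▸ hw)⟩⟩
    exact le_antisymm
      (closure_minimal (Set.singleton_subset_iff.2 hx) isClosed_closure) hsub
  · rintro hSc ⟨F, ⟨y, hy⟩, hFc, hsub⟩
    have hxS : x ∈ S := rfl
    have hCS : closure ({x} : Set X) ⊆ S :=
      closure_minimal (Set.singleton_subset_iff.2 hxS) hSc
    have hyS : y ∈ S := hCS (hsub hy).1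
    have hxF : x ∈ F := by
      have : x ∈ closure ({y} : Set X) := hyS ▸ subset_closure rfl
      exact closure_minimal (Set.singleton_subset_iff.2 hy) hFc this
    exact (hsub hxF).2 rfl
end

section
/- A point x of a topological space X is C_N (i.e., there are no two nonempty disjoint closed subsets of X both contained in the derived set closure {x} \ {x}) if and only if closure {x} is down-directed, i.e., for any y, z ∈ closure {x} one has closure {y} ∩ closure {z} ≠ ∅. -/
/-- A point `x` is `C_N` (there is no pair of nonempty disjoint closed subsets contained
in its derived set) iff `closure {x}` is down-directed w.r.t. the specialization
preorder. -/
theorem cN_iff_downset_down_directed {X : Type*} [TopologicalSpace X] (x : X) :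
    (¬ ∃ F E : Set X, F.Nonempty ∧ E.Nonempty ∧ IsClosed F ∧ IsClosed E ∧
      F ∩ E = ∅ ∧ F ⊆ closure ({x} : Set X) \ {x} ∧ E ⊆ closure ({x} : Set X) \ {x}) ↔
    (∀ y ∈ closure ({x} : Set X), ∀ z ∈ closure ({x} : Set X),
      (closure ({y} : Set X) ∩ closure ({z} : Set X)).Nonempty) := by
  constructor
  · intro h y hy z hz
    by_contra hne
    rw [Set.not_nonempty_iff_eq_empty] at hne
    -- x ∉ closure {y} : else closure {x} ⊆ closure {y}, so z ∈ both closures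
    have hxy : x ∉ closure ({y} : Set X) := by
      intro hx
      have : closure ({x} : Set X) ⊆ closure ({y} : Set X) :=
        closure_minimal (Set.singleton_subset_iff.mpr hx) isClosed_closure
      have : z ∈ closure ({y} : Set X) ∩ closure ({z} : Set X) :=
        ⟨this hz, subset_closure rfl⟩
      simp [hne] at this
    have hxz : x ∉ closure ({z} : Set X) := by
      intro hx
      have : closure ({x} : Set X) ⊆ closure ({z} : Set X) :=
        closure_minimal (Set.singleton_subset_iff.mpr hx) isClosed_closure
      have : y ∈ closure ({y} : Set X) ∩ closure ({z} : Set X) :=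
        ⟨subset_closure rfl, this hy⟩
      simp [hne] at this
    have hyx : closure ({y} : Set X) ⊆ closure ({x} : Set X) :=
      closure_minimal (Set.singleton_subset_iff.mpr hy) isClosed_closure
    have hzx : closure ({z} : Set X) ⊆ closure ({x} : Set X) :=
      closure_minimal (Set.singleton_subset_iff.mpr hz) isClosed_closure
    exact h ⟨closure {y}, closure {z}, ⟨y, subset_closure rfl⟩, ⟨z, subset_closure rfl⟩,
      isClosed_closure, isClosed_closure, hne,
      fun a ha => ⟨hyx ha, fun h' => hxy (h' ▸ ha)⟩,
      fun a ha => ⟨hzx ha, fun h' => hxz (h' ▸ ha)⟩⟩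
  · rintro h ⟨F, E, ⟨f, hf⟩, ⟨e, he⟩, hFc, hEc, hFE, hFsub, hEsub⟩
    obtain ⟨w, hwf, hwe⟩ := h f (hFsub hf).1 e (hEsub he).1
    have : w ∈ F ∩ E :=
      ⟨closure_minimal (Set.singleton_subset_iff.mpr hf) hFc hwf,
       closure_minimal (Set.singleton_subset_iff.mpr he) hEc hwe⟩
    simp [hFE] at this
end

section
/- Let x be a point of a topological space X. (1) If x is S₁ (i.e., the class x̂ is closed), then x is C₀ (i.e., the derived set closure {x} \ {x} is not the union of a nonempty family of nonempty closed subsets). (2) If x is C₀, then x is recurrent (i.e., either {x} is closed or the derived set closure {x} \ {x} is not closed). -/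
/-- (1) An `S₁` point (its class is closed) is `C₀` (its derived set is not a union of a
nonempty family of nonempty closed sets). (2) A `C₀` point is recurrent (it is closed or
its derived set is not closed). -/
theorem s1_imp_c0_and_c0_imp_recurrent {X : Type*} [TopologicalSpace X] (x : X) :
    (IsClosed {y : X | closure ({x} : Set X) = closure ({y} : Set X)} →
      ¬ ∃ 𝒞 : Set (Set X), 𝒞.Nonempty ∧ (∀ F ∈ 𝒞, IsClosed F ∧ F.Nonempty) ∧
        ⋃₀ 𝒞 = closure ({x} : Set X) \ {x}) ∧
    ((¬ ∃ 𝒞 : Set (Set X), 𝒞.Nonempty ∧ (∀ F ∈ 𝒞, IsClosed F ∧ F.Nonempty) ∧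
        ⋃₀ 𝒞 = closure ({x} : Set X) \ {x}) →
      (IsClosed ({x} : Set X) ∨ ¬ IsClosed (closure ({x} : Set X) \ {x}))) := by
  constructor
  · rintro hhat ⟨𝒞, ⟨F, hF⟩, hcl, hun⟩
    obtain ⟨hFc, y, hy⟩ := hcl F hF
    have hyD : y ∈ closure ({x} : Set X) \ {x} := by
      rw [← hun]; exact ⟨F, hF, hy⟩
    -- closure {x} ⊆ x̂ since x̂ is closed and contains x
    have hsub : closure ({x} : Set X) ⊆
        {y : X | closure ({x} : Set X) = closure ({y} : Set X)} := by
      apply closure_minimal _ hhat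
      intro z hz
      rw [Set.mem_singleton_iff] at hz
      subst hz
      exact rfl
    have hyx : closure ({x} : Set X) = closure ({y} : Set X) := hsub hyD.1
    -- closure {y} ⊆ F ⊆ D, but x ∈ closure {x} = closure {y}
    have hclyF : closure ({y} : Set X) ⊆ F :=
      closure_minimal (Set.singleton_subset_iff.mpr hy) hFc
    have hxF : x ∈ F := hclyF (hyx ▸ subset_closure rfl)
    have : x ∈ closure ({x} : Set X) \ {x} := by
      rw [← hun]; exact ⟨F, hF, hxF⟩
    exact this.2 rfl
  · intro h
    by_contra hc
    push_neg at hc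
    obtain ⟨hx, hD⟩ := hc
    apply h
    refine ⟨{closure ({x} : Set X) \ {x}}, Set.singleton_nonempty _, ?_, Set.sUnion_singleton _⟩
    rintro F rfl
    refine ⟨hD, ?_⟩
    rcases (closure ({x} : Set X) \ {x}).eq_empty_or_nonempty with he | hne
    · exfalso
      apply hx
      have : closure ({x} : Set X) = {x} := by
        apply Set.Subset.antisymm _ subset_closure
        intro z hz
        by_contra hz'
        exact absurd ⟨hz, hz'⟩ (he ▸ Set.notMem_empty z)
      rw [← this]; exact isClosed_closure
    · exact hne
end

section
/- A topological space X is nested (i.e., for any two open subsets U, V of X, either U ⊆ V or V ⊆ U) if and only if X is a pre-chain with respect to the specialization preorder, i.e., for any two points x, y of X, either x ∈ closure {y} or y ∈ closure {x}. -/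
/-- A topological space is nested (any two open sets are comparable by inclusion) iff it
is a pre-chain w.r.t. the specialization preorder (any two points are comparable). -/
theorem nested_iff_prechain {X : Type*} [TopologicalSpace X] :
    (∀ U V : Set X, IsOpen U → IsOpen V → U ⊆ V ∨ V ⊆ U) ↔
    (∀ x y : X, x ∈ closure ({y} : Set X) ∨ y ∈ closure ({x} : Set X)) := by
  constructor
  · intro h x y
    by_contra hc
    push_neg at hc
    obtain ⟨hx, hy⟩ := hc
    rw [mem_closure_iff] at hx hy
    push_neg at hx hy
    obtain ⟨U, hU, hxU, hUy⟩ := hx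
    obtain ⟨V, hV, hyV, hVx⟩ := hy
    have hyU : y ∉ U := fun hy => Set.eq_empty_iff_forall_notMem.mp hUy y ⟨hy, rfl⟩
    have hxV : x ∉ V := fun hx => Set.eq_empty_iff_forall_notMem.mp hVx x ⟨hx, rfl⟩
    rcases h U V hU hV with hs | hs
    · exact hxV (hs hxU)
    · exact hyU (hs hyV)
  · intro h U V hU hV
    by_cases hUV : U ⊆ V
    · exact Or.inl hUV
    · right
      obtain ⟨x, hxU, hxV⟩ := Set.not_subset.mp hUV
      intro y hyV
      rcases h x y with hxy | hyx
      · rw [mem_closure_iff] at hxy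
        have := hxy U hU hxU
        obtain ⟨z, hz⟩ := this
        simp at hz
        rcases hz with ⟨hz1, hz2⟩
        exact hz2 ▸ hz1
      · rw [mem_closure_iff] at hyx
        have := hyx V hV hyV
        obtain ⟨z, hz⟩ := this
        simp at hz
        exact absurd (hz.2 ▸ hz.1) hxV
end

section
/- For a topological space X the following are equivalent: (1) the upset of every point is a pre-chain, i.e., for every point z and all points x, y with z ∈ closure {x} and z ∈ closure {y}, either x ∈ closure {y} or y ∈ closure {x}; (2) for any open subsets U, V of X and any points x ∈ U \ V and y ∈ V \ U, one has closure {x} ∩ closure {y} = ∅. -/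
/-- The upset of every point is a pre-chain (w.r.t. the specialization preorder) iff for
any open sets `U, V` and points `x ∈ U \ V`, `y ∈ V \ U` one has
`closure {x} ∩ closure {y} = ∅`. -/
theorem downward_forest_iff_sQ {X : Type*} [TopologicalSpace X] :
    (∀ z x y : X, z ∈ closure ({x} : Set X) → z ∈ closure ({y} : Set X) →
      x ∈ closure ({y} : Set X) ∨ y ∈ closure ({x} : Set X)) ↔
    (∀ U V : Set X, IsOpen U → IsOpen V → ∀ x ∈ U \ V, ∀ y ∈ V \ U,
      closure ({x} : Set X) ∩ closure ({y} : Set X) = ∅) := by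
  constructor
  · intro h U V hU hV x hx y hy
    ext z
    simp only [Set.mem_inter_iff, Set.mem_empty_iff_false, iff_false, not_and]
    intro hzx hzy
    rcases h z x y hzx hzy with hxy | hyx
    · have := hU.mem_nhds hx.1
      have : y ∈ U := by
        have h' := mem_closure_iff.mp hxy U hU hx.1
        simpa using h'
      exact absurd this hy.2
    · have : x ∈ V := by
        have h' := mem_closure_iff.mp hyx V hV hy.1
        simpa using h'
      exact absurd this hx.2
  · intro h z x y hzx hzy
    by_contra hc
    push_neg at hc
    obtain ⟨hxy, hyx⟩ := hc
    rw [mem_closure_iff] at hxy hyx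
    push_neg at hxy hyx
    obtain ⟨U, hU, hxU, hUy⟩ := hxy
    obtain ⟨V, hV, hyV, hVx⟩ := hyx
    have hempty := h U V hU hV x ⟨hxU, by simpa using hVx⟩ y ⟨hyV, by simpa using hUy⟩
    exact Set.eq_empty_iff_forall_notMem.mp hempty z ⟨hzx, hzy⟩
end

section
/- Let φ be a flow on a sequentially compact topological space X, let F be a minimal set of φ, and let U be a neighborhood of F with F ⊊ U such that φ(t, U) ⊆ U for every t > 0 and F = ⋂_{t > 0} φ(t, U) (i.e., F is an attractor with basin of attraction U). Then every point z ∈ U with α(z) ∩ F ≠ ∅ belongs to F. -/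
/-- Let `F` be a minimal set of a flow on a sequentially compact space and `U` a basin of
attraction of the attractor `F`. Then every point `z ∈ U` whose α-limit set meets `F`
belongs to `F`. -/
theorem attractor_alphaLimit_mem {X : Type*} [TopologicalSpace X] [SeqCompactSpace X]
    (φ : ℝ × X → X) (hcont : Continuous φ)
    (hzero : ∀ x : X, φ (0, x) = x)
    (hadd : ∀ s t : ℝ, ∀ x : X, φ (s, φ (t, x)) = φ (s + t, x))
    (F U : Set X)
    -- `F` is a minimal set: nonempty, closed, invariant, with no proper
    -- nonempty closed invariant subset
    (hFne : F.Nonempty) (hFcl : IsClosed F)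
    (hFinv : ∀ t : ℝ, (fun x => φ (t, x)) '' F = F)
    (hFmin : ∀ F' : Set X, F' ⊆ F → F'.Nonempty → IsClosed F' →
      (∀ t : ℝ, (fun x => φ (t, x)) '' F' = F') → F' = F)
    -- `U` is a basin of attraction of the attractor `F`
    (hUnbhd : U ∈ nhdsSet F) (hFU : F ⊂ U)
    (hUfwd : ∀ t : ℝ, 0 < t → (fun x => φ (t, x)) '' U ⊆ U)
    (hFcap : F = ⋂ t ∈ Set.Ioi (0 : ℝ), (fun x => φ (t, x)) '' U)
    (z : X) (hz : z ∈ U)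
    (hα : ((⋂ n : ℝ, closure {y : X | ∃ t : ℝ, t < n ∧ y = φ (t, z)}) ∩ F).Nonempty) :
    z ∈ F := by
  obtain ⟨p, hpα, hpF⟩ := hα
  have hpint : p ∈ interior U := subset_interior_iff_mem_nhdsSet.mpr hUnbhd hpF
  rw [hFcap]
  refine Set.mem_iInter₂.2 fun s hs => ?_
  have hs' : (0:ℝ) < s := hs
  have hpcl : p ∈ closure {y : X | ∃ t : ℝ, t < -s ∧ y = φ (t, z)} :=
    Set.mem_iInter.1 hpα (-s)
  obtain ⟨y, hyU, t, ht, rfl⟩ :=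
    (mem_closure_iff.1 hpcl) (interior U) isOpen_interior hpint
  have hyU' : φ (t, z) ∈ U := interior_subset hyU
  refine ⟨φ (-t - s, φ (t, z)), hUfwd (-t - s) (by linarith) ⟨_, hyU', rfl⟩, ?_⟩
  simp only [hadd]
  have : s + (-t - s + t) = 0 := by ring
  rw [this, hzero]
end
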